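/- arXiv:1702.07064 — 2 statements merged into one kernel-verified Lean document; each statement's English description precedes it below -/
import Mathlib

section
/- Theorem 2 (non-increasing iteration cost). Let A be an n×n real matrix, B an n×m real matrix, X ⊆ ℝ^n and U ⊆ ℝ^m convex sets, and h : ℝ^n × ℝ^m → ℝ jointly convex and nonnegative. Let I be a finite nonempty index set with stored states z : I → ℝ^n satisfying z i ∈ X, stored inputs v : I → ℝ^m with v i ∈ U, a successor map σ : I → I with z (σ i) = A (z i) + B (v i), and stored costs c : I → ℝ with c i ≥ 0 and c i = h(z i, v i) + c (σ i) for all i; let p be the barycentric cost function from z and c, CS = convexHull ℝ {z i : i ∈ I}, and Q the LMPC value function with horizon N ≥ 1. Suppose the previous iteration trajectory (x^{prev}_t)_{t=0}^{T}, (u^{prev}_t)_{t=0}^{T−1} with T ≥ N satisfies the dynamics and constraints and is stored: for every t ≤ T there is i_t ∈ I with z i_t = x^{prev}_t and c i_t = ∑_{l=t}^{T−1} h(x^{prev}_l, u^{prev}_l). Suppose the closed-loop sequences (x_t)_{t∈ℕ}, (u_t)_{t∈ℕ} satisfy x_0 = x^{prev}_0 and, for every t, there is a feasible solution for initial state x_t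 attaining Q(x_t) whose first input is u_t and x_{t+1} = A x_t + B u_t. Then the new iteration cost does not exceed the previous one: t ↦ h(x_t, u_t) is summable and ∑'_{t∈ℕ} h(x_t, u_t) ≤ ∑_{t=0}^{T−1} h(x^{prev}_t, u^{prev}_t). -/
/-- The barycentric cost function built from stored points `z` and stored costs `c`:
`p(x) = sInf { ∑ i, λ i * c i : λ ≥ 0, ∑ λ = 1, ∑ λ • z = x }`. -/
noncomputable def barycentric {n : ℕ} {ι : Type*} [Fintype ι]
    (z : ι → Fin n → ℝ) (c : ι → ℝ) (x : Fin n → ℝ) : ℝ :=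
  sInf {s : ℝ | ∃ lam : ι → ℝ, (∀ i, 0 ≤ lam i) ∧ (∑ i, lam i) = 1 ∧
    (∑ i, lam i • z i) = x ∧ s = ∑ i, lam i * c i}

/-- Feasibility of the LMPC finite-time optimal control problem with horizon `N` at
initial state `x`. -/
def Feasible {n m : ℕ} (A : Matrix (Fin n) (Fin n) ℝ) (B : Matrix (Fin n) (Fin m) ℝ)
    (X : Set (Fin n → ℝ)) (U : Set (Fin m → ℝ)) (CS : Set (Fin n → ℝ)) (N : ℕ)
    (x : Fin n → ℝ) (u : ℕ → Fin m → ℝ) (xs : ℕ → Fin n → ℝ) : Prop :=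
  xs 0 = x ∧ (∀ k < N, xs (k + 1) = A.mulVec (xs k) + B.mulVec (u k)) ∧
    (∀ k < N, xs k ∈ X) ∧ (∀ k < N, u k ∈ U) ∧ xs N ∈ CS

/-- The LMPC value function `Q` with horizon `N`, stage cost `h`, terminal set `CS`
and terminal cost `p`. -/
noncomputable def lmpcValue {n m : ℕ} (A : Matrix (Fin n) (Fin n) ℝ)
    (B : Matrix (Fin n) (Fin m) ℝ) (X : Set (Fin n → ℝ)) (U : Set (Fin m → ℝ))
    (CS : Set (Fin n → ℝ)) (N : ℕ) (h : (Fin n → ℝ) → (Fin m → ℝ) → ℝ)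
    (p : (Fin n → ℝ) → ℝ) (x : Fin n → ℝ) : ℝ :=
  sInf {s : ℝ | ∃ u xs, Feasible A B X U CS N x u xs ∧
    s = (∑ k ∈ Finset.range N, h (xs k) (u k)) + p (xs N)}

/-!
The LMPC value function `Q` decreases along the closed loop by at least the stage cost:
shifting an optimal solution at `x t` by one step and appending the input `∑ λ i • v i`,
where `λ` are barycentric weights of its terminal state, gives a feasible solution at
`x (t + 1)`. Its new terminal state `∑ λ i • z (σ i)` lies in the safe set, and by Jensen's
inequality and `c i = h (z i) (v i) + c (σ i)` the appended stage plus the new terminal cost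
are at most `∑ λ i * c i`. Hence `Q (x (t + 1)) + h (x t) (u t) ≤ Q (x t)`, the closed-loop
cost is at most `Q (x 0)`, and the stored previous trajectory is a feasible solution at `x 0`
whose cost is the previous iteration cost.
-/

open Finset Matrix

section Barycentric

variable {n : ℕ} {ι : Type*} [Fintype ι] {z : ι → Fin n → ℝ} {c : ι → ℝ}

theorem convexHull_range_eq_image_stdSimplex {E : Type*} [AddCommGroup E] [Module ℝ E]
    (e : ι → E) :
    convexHull ℝ (Set.range e) = Fintype.linearCombination ℝ e '' stdSimplex ℝ ι := by
  classical
  rw [← convexHull_rangle_single_eq_stdSimplex, LinearMap.image_convexHull, ← Set.range_comp]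
  congr
  ext i
  simp

theorem sum_fiberwise_smul {κ R M : Type*} [Fintype κ] [DecidableEq κ] [Semiring R]
    [AddCommMonoid M] [Module R M] (w : ι → R) (f : ι → κ) (g : κ → M) :
    ∑ j, (∑ i with f i = j, w i) • g j = ∑ i, w i • g (f i) := by
  rw [← Finset.sum_fiberwise univ f (fun i => w i • g (f i))]
  refine Finset.sum_congr rfl fun j _ => ?_
  rw [Finset.sum_smul]
  exact Finset.sum_congr rfl fun i hi => by rw [(Finset.mem_filter.mp hi).2]

theorem barycentric_le (hc : ∀ i, 0 ≤ c i) {lam : ι → ℝ}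
    (hlam : lam ∈ stdSimplex ℝ ι) :
    barycentric z c (∑ i, lam i • z i) ≤ ∑ i, lam i * c i := by
  refine csInf_le ⟨0, ?_⟩ ⟨lam, hlam.1, hlam.2, rfl, rfl⟩
  rintro s ⟨lam', hlam'₀, -, -, rfl⟩
  exact Finset.sum_nonneg fun i _ => mul_nonneg (hlam'₀ i) (hc i)

theorem barycentric_nonneg (hc : ∀ i, 0 ≤ c i) (x : Fin n → ℝ) :
    0 ≤ barycentric z c x := by
  refine Real.sInf_nonneg ?_
  rintro s ⟨lam, hlam₀, -, -, rfl⟩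
  exact Finset.sum_nonneg fun i _ => mul_nonneg (hlam₀ i) (hc i)

theorem barycentric_apply_le (hc : ∀ i, 0 ≤ c i) (i : ι) : barycentric z c (z i) ≤ c i := by
  classical
  simpa [Pi.single_apply] using barycentric_le (z := z) hc (single_mem_stdSimplex ℝ i)

theorem barycentric_sum_comp_le {κ : Type*} [Fintype κ] (hc : ∀ i, 0 ≤ c i) (f : κ → ι)
    {lam : κ → ℝ} (hlam : lam ∈ stdSimplex ℝ κ) :
    barycentric z c (∑ k, lam k • z (f k)) ≤ ∑ k, lam k * c (f k) := by
  -- not `classical`: the fibre filters must carry the instance `sum_fiberwise_smul` expects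
  have := Classical.decEq ι
  have hpush : (fun i => ∑ k with f k = i, lam k) ∈ stdSimplex ℝ ι :=
    ⟨fun i => Finset.sum_nonneg fun k _ => hlam.1 k,
      (Finset.sum_fiberwise univ f lam).trans hlam.2⟩
  have h := barycentric_le (z := z) hc hpush
  simp only [← smul_eq_mul] at h ⊢
  rwa [sum_fiberwise_smul, sum_fiberwise_smul] at h

theorem le_barycentric {x : Fin n → ℝ} (hx : x ∈ convexHull ℝ (Set.range z)) {a : ℝ}
    (ha : ∀ lam ∈ stdSimplex ℝ ι, ∑ i, lam i • z i = x → a ≤ ∑ i, lam i * c i) :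
    a ≤ barycentric z c x := by
  rw [convexHull_range_eq_image_stdSimplex] at hx
  obtain ⟨lam, hlam, hlamx⟩ := hx
  refine le_csInf ⟨_, lam, hlam.1, hlam.2, ?_, rfl⟩ ?_
  · simpa [Fintype.linearCombination_apply] using hlamx
  · rintro s ⟨lam', hlam'₀, hlam'₁, hlam'x, rfl⟩
    exact ha lam' ⟨hlam'₀, hlam'₁⟩ hlam'x

end Barycentric

section LMPC

variable {n m : ℕ} {A : Matrix (Fin n) (Fin n) ℝ} {B : Matrix (Fin n) (Fin m) ℝ}
  {X : Set (Fin n → ℝ)} {U : Set (Fin m → ℝ)} {CS : Set (Fin n → ℝ)} {N : ℕ}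
  {h : (Fin n → ℝ) → (Fin m → ℝ) → ℝ} {p : (Fin n → ℝ) → ℝ}
  {x : Fin n → ℝ} {u : ℕ → Fin m → ℝ} {xs : ℕ → Fin n → ℝ}

theorem Feasible.tail (hf : Feasible A B X U CS (N + 1) x u xs) :
    Feasible A B X U CS N (xs 1) (fun k => u (k + 1)) (fun k => xs (k + 1)) := by
  obtain ⟨-, hdyn, hX, hU, hCS⟩ := hf
  exact ⟨rfl, fun k hk => hdyn (k + 1) (by omega), fun k hk => hX (k + 1) (by omega),
    fun k hk => hU (k + 1) (by omega), hCS⟩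

theorem Feasible.extend (hf : Feasible A B X U CS N x u xs) (hCSX : CS ⊆ X) {w : Fin m → ℝ}
    (hw : w ∈ U) (hnext : A *ᵥ xs N + B *ᵥ w ∈ CS) :
    Feasible A B X U CS (N + 1) x (Function.update u N w)
      (Function.update xs (N + 1) (A *ᵥ xs N + B *ᵥ w)) := by
  obtain ⟨hx, hdyn, hX, hU, hCS⟩ := hf
  refine ⟨?_, fun k hk => ?_, fun k hk => ?_, fun k hk => ?_, by simpa using hnext⟩
  · simpa using hx
  · rcases Nat.lt_succ_iff_lt_or_eq.mp hk with hk | rfl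
    · simp [Function.update_of_ne (show k + 1 ≠ N + 1 by omega),
        Function.update_of_ne (show k ≠ N + 1 by omega), Function.update_of_ne hk.ne, hdyn k hk]
    · simp
  · rcases Nat.lt_succ_iff_lt_or_eq.mp hk with hk | rfl
    · simpa [Function.update_of_ne (show k ≠ N + 1 by omega)] using hX k hk
    · simpa using hCSX hCS
  · rcases Nat.lt_succ_iff_lt_or_eq.mp hk with hk | rfl
    · simpa [Function.update_of_ne hk.ne] using hU k hk
    · simpa using hw

theorem lmpcValue_le (hh : ∀ x u, 0 ≤ h x u) (hp : ∀ y, 0 ≤ p y)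
    (hf : Feasible A B X U CS N x u xs) :
    lmpcValue A B X U CS N h p x ≤ ∑ k ∈ range N, h (xs k) (u k) + p (xs N) := by
  refine csInf_le ⟨0, ?_⟩ ⟨u, xs, hf, rfl⟩
  rintro s ⟨u', xs', -, rfl⟩
  exact add_nonneg (Finset.sum_nonneg fun _ _ => hh _ _) (hp _)

theorem lmpcValue_nonneg (hh : ∀ x u, 0 ≤ h x u) (hp : ∀ y, 0 ≤ p y) (x : Fin n → ℝ) :
    0 ≤ lmpcValue A B X U CS N h p x := by
  refine Real.sInf_nonneg ?_
  rintro s ⟨u', xs', -, rfl⟩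
  exact add_nonneg (Finset.sum_nonneg fun _ _ => hh _ _) (hp _)

theorem lmpcValue_tail_add_le (hh : ∀ x u, 0 ≤ h x u) (hp : ∀ y, 0 ≤ p y)
    (hf : Feasible A B X U CS (N + 1) x u xs) :
    lmpcValue A B X U CS N h p (xs 1) + h (xs 0) (u 0) ≤
      ∑ k ∈ range (N + 1), h (xs k) (u k) + p (xs (N + 1)) := by
  have := lmpcValue_le hh hp hf.tail
  rw [Finset.sum_range_succ']
  linarith

theorem lmpcValue_shift_add_le (hh : ∀ x u, 0 ≤ h x u) (hp : ∀ y, 0 ≤ p y) (hCSX : CS ⊆ X)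
    (hN : N ≠ 0) (hf : Feasible A B X U CS N x u xs) {w : Fin m → ℝ} (hw : w ∈ U)
    (hnext : A *ᵥ xs N + B *ᵥ w ∈ CS) :
    lmpcValue A B X U CS N h p (xs 1) + h (xs 0) (u 0) ≤
      ∑ k ∈ range N, h (xs k) (u k) + h (xs N) w + p (A *ᵥ xs N + B *ᵥ w) := by
  have hstep := lmpcValue_tail_add_le hh hp (hf.extend hCSX hw hnext)
  have hsum : ∑ k ∈ range N, h (Function.update xs (N + 1) (A *ᵥ xs N + B *ᵥ w) k)
      (Function.update u N w k) = ∑ k ∈ range N, h (xs k) (u k) :=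
    Finset.sum_congr rfl fun k hk => by
      have hk := Finset.mem_range.mp hk
      rw [Function.update_of_ne (by omega), Function.update_of_ne hk.ne]
  simpa only [Finset.sum_range_succ, hsum, Function.update_self,
    Function.update_of_ne (show 0 ≠ N + 1 by omega),
    Function.update_of_ne (show 1 ≠ N + 1 by omega),
    Function.update_of_ne (show N ≠ N + 1 by omega),
    Function.update_of_ne (Ne.symm hN)] using hstep

end LMPC

section BarycentricTerminalCost

variable {n m : ℕ} {ι : Type*} [Fintype ι] {A : Matrix (Fin n) (Fin n) ℝ}
  {B : Matrix (Fin n) (Fin m) ℝ} {X : Set (Fin n → ℝ)} {U : Set (Fin m → ℝ)}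
  {h : (Fin n → ℝ) → (Fin m → ℝ) → ℝ} {z : ι → Fin n → ℝ}
  {v : ι → Fin m → ℝ} {σ : ι → ι} {c : ι → ℝ} {lam : ι → ℝ}

theorem sum_smul_comp_eq_mulVec_add_mulVec (hσ : ∀ i, z (σ i) = A *ᵥ z i + B *ᵥ v i) :
    ∑ i, lam i • z (σ i) = A *ᵥ ∑ i, lam i • z i + B *ᵥ ∑ i, lam i • v i := by
  simp only [hσ, smul_add, Finset.sum_add_distrib, mulVec_sum, mulVec_smul]

theorem stage_add_barycentric_next_le
    (hconv : ConvexOn ℝ Set.univ (fun q : (Fin n → ℝ) × (Fin m → ℝ) => h q.1 q.2))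
    (hσ : ∀ i, z (σ i) = A *ᵥ z i + B *ᵥ v i) (hcpos : ∀ i, 0 ≤ c i)
    (hc : ∀ i, c i = h (z i) (v i) + c (σ i)) (hlam : lam ∈ stdSimplex ℝ ι) :
    h (∑ i, lam i • z i) (∑ i, lam i • v i) +
        barycentric z c (A *ᵥ ∑ i, lam i • z i + B *ᵥ ∑ i, lam i • v i) ≤
      ∑ i, lam i * c i := by
  have hjensen :
      h (∑ i, lam i • z i) (∑ i, lam i • v i) ≤ ∑ i, lam i * h (z i) (v i) := by
    simpa [Prod.fst_sum, Prod.snd_sum] using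
      hconv.map_sum_le (t := univ) (p := fun i => (z i, v i)) (fun i _ => hlam.1 i) hlam.2
        (fun i _ => Set.mem_univ _)
  have hnext := barycentric_sum_comp_le (z := z) hcpos σ hlam
  rw [sum_smul_comp_eq_mulVec_add_mulVec hσ] at hnext
  calc _ ≤ ∑ i, lam i * h (z i) (v i) + ∑ i, lam i * c (σ i) := add_le_add hjensen hnext
    _ = ∑ i, lam i * c i := by
      rw [← Finset.sum_add_distrib]
      exact Finset.sum_congr rfl fun i _ => by rw [hc i, mul_add]

theorem lmpcValue_next_add_le (hX : Convex ℝ X) (hU : Convex ℝ U)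
    (hconv : ConvexOn ℝ Set.univ (fun q : (Fin n → ℝ) × (Fin m → ℝ) => h q.1 q.2))
    (hh : ∀ x u, 0 ≤ h x u) (hz : ∀ i, z i ∈ X) (hv : ∀ i, v i ∈ U)
    (hσ : ∀ i, z (σ i) = A *ᵥ z i + B *ᵥ v i) (hcpos : ∀ i, 0 ≤ c i)
    (hc : ∀ i, c i = h (z i) (v i) + c (σ i)) {N : ℕ} (hN : N ≠ 0) {x : Fin n → ℝ}
    {us : ℕ → Fin m → ℝ} {xs : ℕ → Fin n → ℝ}
    (hf : Feasible A B X U (convexHull ℝ (Set.range z)) N x us xs) :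
    lmpcValue A B X U (convexHull ℝ (Set.range z)) N h (barycentric z c)
        (A *ᵥ x + B *ᵥ us 0) + h x (us 0) ≤
      ∑ k ∈ range N, h (xs k) (us k) + barycentric z c (xs N) := by
  have hCSX : convexHull ℝ (Set.range z) ⊆ X := convexHull_min (Set.range_subset_iff.2 hz) hX
  have hx1 : A *ᵥ x + B *ᵥ us 0 = xs 1 := by
    rw [← hf.1]; exact (hf.2.1 0 (Nat.pos_of_ne_zero hN)).symm
  rw [hx1, ← hf.1, ← sub_le_iff_le_add']
  refine le_barycentric hf.2.2.2.2 fun lam hlam hlamx => ?_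
  have hterm := stage_add_barycentric_next_le hconv hσ hcpos hc hlam
  rw [hlamx] at hterm
  set w := ∑ i, lam i • v i
  have hwU : w ∈ U := hU.sum_mem (fun i _ => hlam.1 i) hlam.2 (fun i _ => hv i)
  have hnext : A *ᵥ xs N + B *ᵥ w ∈ convexHull ℝ (Set.range z) := by
    rw [← hlamx, ← sum_smul_comp_eq_mulVec_add_mulVec hσ]
    exact (convex_convexHull ℝ _).sum_mem (fun i _ => hlam.1 i) hlam.2
      (fun i _ => subset_convexHull ℝ _ ⟨σ i, rfl⟩)
  have hstep :=
    lmpcValue_shift_add_le hh (barycentric_nonneg (z := z) hcpos) hCSX hN hf hwU hnext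
  linarith

end BarycentricTerminalCost

theorem summable_and_tsum_le_of_lyapunov {a V : ℕ → ℝ} (ha : ∀ t, 0 ≤ a t)
    (hV : ∀ t, 0 ≤ V t) (hstep : ∀ t, V (t + 1) + a t ≤ V t) :
    Summable a ∧ ∑' t, a t ≤ V 0 := by
  have hpartial : ∀ t, ∑ k ∈ range t, a k + V t ≤ V 0 := by
    intro t
    induction t with
    | zero => simp
    | succ t ih => rw [Finset.sum_range_succ]; linarith [hstep t]
  have hbound : ∀ t, ∑ k ∈ range t, a k ≤ V 0 := fun t => by linarith [hpartial t, hV t]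
  have hsum := summable_of_sum_range_le ha hbound
  exact ⟨hsum, hsum.tsum_le_of_sum_range_le hbound⟩

theorem lmpc_iteration_cost_nonincreasing_general
    {n m : ℕ} {ι : Type*} [Fintype ι]
    (A : Matrix (Fin n) (Fin n) ℝ) (B : Matrix (Fin n) (Fin m) ℝ)
    (X : Set (Fin n → ℝ)) (hX : Convex ℝ X)
    (U : Set (Fin m → ℝ)) (hU : Convex ℝ U)
    (h : (Fin n → ℝ) → (Fin m → ℝ) → ℝ)
    (hconv : ConvexOn ℝ Set.univ (fun q : (Fin n → ℝ) × (Fin m → ℝ) => h q.1 q.2))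
    (hpos : ∀ x u, 0 ≤ h x u)
    (z : ι → Fin n → ℝ) (hz : ∀ i, z i ∈ X)
    (v : ι → Fin m → ℝ) (hv : ∀ i, v i ∈ U)
    (σ : ι → ι) (hσ : ∀ i, z (σ i) = A.mulVec (z i) + B.mulVec (v i))
    (c : ι → ℝ) (hcpos : ∀ i, 0 ≤ c i) (hc : ∀ i, c i = h (z i) (v i) + c (σ i))
    (N : ℕ) (hN : 1 ≤ N)
    -- the previous iteration trajectory, satisfying dynamics and constraints, is stored
    (T : ℕ) (hT : N ≤ T)
    (xprev : ℕ → Fin n → ℝ) (uprev : ℕ → Fin m → ℝ)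
    (hdynp : ∀ t < T, xprev (t + 1) = A.mulVec (xprev t) + B.mulVec (uprev t))
    (hxXp : ∀ t ≤ T, xprev t ∈ X) (huUp : ∀ t < T, uprev t ∈ U)
    (hstored : ∀ t ≤ T, ∃ i : ι, z i = xprev t ∧
      c i = ∑ l ∈ Finset.Ico t T, h (xprev l) (uprev l))
    -- the closed-loop sequences of the new iteration
    (x : ℕ → Fin n → ℝ) (u : ℕ → Fin m → ℝ)
    (hx0 : x 0 = xprev 0)
    (hcl : ∀ t, ∃ us xs,
      Feasible A B X U (convexHull ℝ (Set.range z)) N (x t) us xs ∧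
      us 0 = u t ∧
      (∑ k ∈ Finset.range N, h (xs k) (us k)) + barycentric z c (xs N) =
        lmpcValue A B X U (convexHull ℝ (Set.range z)) N h (barycentric z c) (x t))
    (hdyn : ∀ t, x (t + 1) = A.mulVec (x t) + B.mulVec (u t)) :
    Summable (fun t => h (x t) (u t)) ∧
      (∑' t, h (x t) (u t)) ≤ ∑ t ∈ Finset.range T, h (xprev t) (uprev t) := by
  set Q := lmpcValue A B X U (convexHull ℝ (Set.range z)) N h (barycentric z c)
  have hdescent : ∀ t, Q (x (t + 1)) + h (x t) (u t) ≤ Q (x t) := fun t => by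
    obtain ⟨us, xs, hf, hus0, hopt⟩ := hcl t
    rw [hdyn t, ← hus0, ← hopt]
    exact lmpcValue_next_add_le hX hU hconv hpos hz hv hσ hcpos hc (by omega) hf
  obtain ⟨iN, hziN, hciN⟩ := hstored N hT
  have hprev : Feasible A B X U (convexHull ℝ (Set.range z)) N (x 0) uprev xprev :=
    ⟨hx0.symm, fun k hk => hdynp k (by omega), fun k hk => hxXp k (by omega),
      fun k hk => huUp k (by omega), hziN ▸ subset_convexHull ℝ _ ⟨iN, rfl⟩⟩
  have hQ0 : Q (x 0) ≤ ∑ t ∈ range T, h (xprev t) (uprev t) := by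
    calc Q (x 0) ≤ ∑ k ∈ range N, h (xprev k) (uprev k) + barycentric z c (xprev N) :=
          lmpcValue_le hpos (barycentric_nonneg hcpos) hprev
      _ ≤ ∑ k ∈ range N, h (xprev k) (uprev k) +
            ∑ l ∈ Ico N T, h (xprev l) (uprev l) := by
          rw [← hziN, ← hciN]; gcongr; exact barycentric_apply_le hcpos iN
      _ = ∑ t ∈ range T, h (xprev t) (uprev t) := Finset.sum_range_add_sum_Ico _ hT
  obtain ⟨hsum, hle⟩ := summable_and_tsum_le_of_lyapunov (fun t => hpos (x t) (u t))
    (fun t => lmpcValue_nonneg hpos (barycentric_nonneg hcpos) (x t)) hdescent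
  exact ⟨hsum, hle.trans hQ0⟩

/-- Theorem 2, non-increasing iteration cost: the cost of the LMPC
closed-loop iteration does not exceed the cost of the stored previous iteration. -/
theorem lmpc_iteration_cost_nonincreasing
    {n m : ℕ} {ι : Type*} [Fintype ι] [Nonempty ι]
    (A : Matrix (Fin n) (Fin n) ℝ) (B : Matrix (Fin n) (Fin m) ℝ)
    (X : Set (Fin n → ℝ)) (hX : Convex ℝ X)
    (U : Set (Fin m → ℝ)) (hU : Convex ℝ U)
    (h : (Fin n → ℝ) → (Fin m → ℝ) → ℝ)
    (hconv : ConvexOn ℝ Set.univ (fun q : (Fin n → ℝ) × (Fin m → ℝ) => h q.1 q.2))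
    (hpos : ∀ x u, 0 ≤ h x u)
    (z : ι → Fin n → ℝ) (hz : ∀ i, z i ∈ X)
    (v : ι → Fin m → ℝ) (hv : ∀ i, v i ∈ U)
    (σ : ι → ι) (hσ : ∀ i, z (σ i) = A.mulVec (z i) + B.mulVec (v i))
    (c : ι → ℝ) (hcpos : ∀ i, 0 ≤ c i) (hc : ∀ i, c i = h (z i) (v i) + c (σ i))
    (N : ℕ) (hN : 1 ≤ N)
    -- the previous iteration trajectory, satisfying dynamics and constraints, is stored
    (T : ℕ) (hT : N ≤ T)
    (xprev : ℕ → Fin n → ℝ) (uprev : ℕ → Fin m → ℝ)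
    (hdynp : ∀ t < T, xprev (t + 1) = A.mulVec (xprev t) + B.mulVec (uprev t))
    (hxXp : ∀ t ≤ T, xprev t ∈ X) (huUp : ∀ t < T, uprev t ∈ U)
    (hstored : ∀ t ≤ T, ∃ i : ι, z i = xprev t ∧
      c i = ∑ l ∈ Finset.Ico t T, h (xprev l) (uprev l))
    -- the closed-loop sequences of the new iteration
    (x : ℕ → Fin n → ℝ) (u : ℕ → Fin m → ℝ)
    (hx0 : x 0 = xprev 0)
    (hcl : ∀ t, ∃ us xs,
      Feasible A B X U (convexHull ℝ (Set.range z)) N (x t) us xs ∧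
      us 0 = u t ∧
      (∑ k ∈ Finset.range N, h (xs k) (us k)) + barycentric z c (xs N) =
        lmpcValue A B X U (convexHull ℝ (Set.range z)) N h (barycentric z c) (x t))
    (hdyn : ∀ t, x (t + 1) = A.mulVec (x t) + B.mulVec (u t)) :
    Summable (fun t => h (x t) (u t)) ∧
      (∑' t, h (x t) (u t)) ≤ ∑ t ∈ Finset.range T, h (xprev t) (uprev t) :=
  lmpc_iteration_cost_nonincreasing_general A B X hX U hU h hconv hpos z hz v hv σ hσ c hcpos hc N
    hN T hT xprev uprev hdynp hxXp huUp hstored x u hx0 hcl hdyn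
end

section
/- Let A be an n×n real matrix, B an n×m real matrix, X ⊆ ℝ^n and U ⊆ ℝ^m compact sets, h : ℝ^n × ℝ^m → ℝ continuous, and N ≥ 1. Let I be a finite nonempty index set, z : I → ℝ^n, c : I → ℝ, p the barycentric cost function from z and c, CS = convexHull ℝ {z i : i ∈ I}, and Q the LMPC value function. If the feasible set at x is nonempty, then the infimum defining Q(x) is attained: there exist u*_0, …, u*_{N−1} ∈ U with generated states x*_0 = x, x*_{k+1} = A x*_k + B u*_k satisfying x*_k ∈ X for k < N and x*_N ∈ CS, such that ∑_{k=0}^{N−1} h(x*_k, u*_k) + p(x*_N) = Q(x). -/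
/-!
Fix barycentric weights `w` together with the inputs. The cost
`∑ₖ h(xₖ, uₖ) + ∑ᵢ wᵢ cᵢ` is continuous in `(w, u)`, and the pairs satisfying the constraints
(`w` in the standard simplex, `uₖ ∈ U`, `xₖ ∈ X`, `x_N = ∑ᵢ wᵢ zᵢ`) form a compact set, so the
cost has a minimizer there. Since `p(x_N)` is itself a minimum over the weights representing
`x_N`, minimizing jointly over `(w, u)` is the same as minimizing `∑ₖ h(xₖ, uₖ) + p(x_N)` over
`u`, and the minimizing inputs attain the value function.
-/

open Set

section Barycentric

variable {ι : Type*} [Fintype ι]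

theorem convexHull_range_eq_image_stdSimplex_s13 {E : Type*} [AddCommGroup E] [Module ℝ E]
    (z : ι → E) :
    convexHull ℝ (range z) = (fun w : ι → ℝ => ∑ i, w i • z i) '' stdSimplex ℝ ι := by
  classical
  have hz : Fintype.linearCombination ℝ z ∘ (fun i ↦ Pi.single i 1) = z := by
    ext i; simp [Fintype.linearCombination_apply_single]
  conv_lhs => rw [← hz, range_comp, ← LinearMap.image_convexHull,
    convexHull_rangle_single_eq_stdSimplex]
  rfl

def barycentricWeights {E : Type*} [AddCommGroup E] [Module ℝ E] (z : ι → E) (y : E) :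
    Set (ι → ℝ) :=
  stdSimplex ℝ ι ∩ {w | ∑ i, w i • z i = y}

theorem nonempty_barycentricWeights_iff {E : Type*} [AddCommGroup E] [Module ℝ E]
    {z : ι → E} {y : E} :
    (barycentricWeights z y).Nonempty ↔ y ∈ convexHull ℝ (range z) := by
  rw [convexHull_range_eq_image_stdSimplex_s13]
  rfl

theorem isCompact_barycentricWeights {E : Type*} [AddCommGroup E] [Module ℝ E]
    [TopologicalSpace E] [T2Space E] [ContinuousAdd E] [ContinuousSMul ℝ E]
    (z : ι → E) (y : E) : IsCompact (barycentricWeights z y) :=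
  (isCompact_stdSimplex ℝ ι).inter_right (isClosed_eq (by fun_prop) continuous_const)

variable {n : ℕ}

theorem barycentric_eq_sInf_image (z : ι → Fin n → ℝ) (c : ι → ℝ) (y : Fin n → ℝ) :
    barycentric z c y = sInf ((fun w => ∑ i, w i * c i) '' barycentricWeights z y) := by
  refine congrArg sInf (ext fun s => ?_)
  constructor
  · rintro ⟨w, hw0, hw1, hwy, rfl⟩
    exact ⟨w, ⟨⟨hw0, hw1⟩, hwy⟩, rfl⟩
  · rintro ⟨w, ⟨⟨hw0, hw1⟩, hwy⟩, rfl⟩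
    exact ⟨w, hw0, hw1, hwy, rfl⟩

theorem isCompact_image_barycentricWeights (z : ι → Fin n → ℝ) (c : ι → ℝ) (y : Fin n → ℝ) :
    IsCompact ((fun w => ∑ i, w i * c i) '' barycentricWeights z y) :=
  (isCompact_barycentricWeights z y).image (by fun_prop)

theorem barycentric_le_s13 {z : ι → Fin n → ℝ} (c : ι → ℝ) {y : Fin n → ℝ} {w : ι → ℝ}
    (hw : w ∈ barycentricWeights z y) : barycentric z c y ≤ ∑ i, w i * c i := by
  rw [barycentric_eq_sInf_image]
  exact csInf_le (isCompact_image_barycentricWeights z c y).bddBelow (mem_image_of_mem _ hw)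

theorem exists_mem_barycentricWeights_barycentric_eq {z : ι → Fin n → ℝ} (c : ι → ℝ)
    {y : Fin n → ℝ} (hy : y ∈ convexHull ℝ (range z)) :
    ∃ w ∈ barycentricWeights z y, ∑ i, w i * c i = barycentric z c y := by
  rw [barycentric_eq_sInf_image]
  exact (isCompact_image_barycentricWeights z c y).sInf_mem
    ((nonempty_barycentricWeights_iff.mpr hy).image _)

end Barycentric

section Trajectory

variable {n m : ℕ} (A : Matrix (Fin n) (Fin n) ℝ) (B : Matrix (Fin n) (Fin m) ℝ)
  (x : Fin n → ℝ)

def trajectory (u : ℕ → Fin m → ℝ) : ℕ → Fin n → ℝ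
  | 0 => x
  | k + 1 => A.mulVec (trajectory u k) + B.mulVec (u k)

theorem continuous_trajectory_apply (k : ℕ) :
    Continuous fun u : ℕ → Fin m → ℝ => trajectory A B x u k := by
  induction k with
  | zero => exact continuous_const
  | succ k ih =>
    exact ((Matrix.mulVecLin A).continuous_of_finiteDimensional.comp ih).add
      ((Matrix.mulVecLin B).continuous_of_finiteDimensional.comp (continuous_apply k))

variable {A B x} {X : Set (Fin n → ℝ)} {U : Set (Fin m → ℝ)} {CS : Set (Fin n → ℝ)} {N : ℕ}
  {u u' : ℕ → Fin m → ℝ} {xs : ℕ → Fin n → ℝ}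

theorem Feasible.eq_trajectory (hF : Feasible A B X U CS N x u xs) {k : ℕ} (hk : k ≤ N) :
    xs k = trajectory A B x u k := by
  induction k with
  | zero => exact hF.1
  | succ k ih => rw [hF.2.1 k hk, ih (Nat.le_of_succ_le hk), trajectory]

theorem Feasible.congr_input (hF : Feasible A B X U CS N x u xs) (hu : ∀ k < N, u k = u' k) :
    Feasible A B X U CS N x u' xs := by
  obtain ⟨h0, hstep, hX, hU, hCS⟩ := hF
  exact ⟨h0, fun k hk => hu k hk ▸ hstep k hk, hX, fun k hk => hu k hk ▸ hU k hk, hCS⟩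

end Trajectory

section JointProblem

variable {n m : ℕ} {ι : Type*} [Fintype ι]
  (A : Matrix (Fin n) (Fin n) ℝ) (B : Matrix (Fin n) (Fin m) ℝ)
  (X : Set (Fin n → ℝ)) (U : Set (Fin m → ℝ)) (N : ℕ) (z : ι → Fin n → ℝ) (x : Fin n → ℝ)

/-- The inputs are forced to vanish from time `N` on, which makes this set compact. -/
def jointFeasibleSet : Set ((ι → ℝ) × (ℕ → Fin m → ℝ)) :=
  (stdSimplex ℝ ι ×ˢ univ.pi fun k => if k < N then U else {0}) ∩
    {q | ∀ k < N, trajectory A B x q.2 k ∈ X} ∩ {q | ∑ i, q.1 i • z i = trajectory A B x q.2 N}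

def jointCost (h : (Fin n → ℝ) → (Fin m → ℝ) → ℝ) (c : ι → ℝ)
    (q : (ι → ℝ) × (ℕ → Fin m → ℝ)) : ℝ :=
  ∑ k ∈ Finset.range N, h (trajectory A B x q.2 k) (q.2 k) + ∑ i, q.1 i * c i

theorem continuous_jointCost {h : (Fin n → ℝ) → (Fin m → ℝ) → ℝ}
    (hcont : Continuous fun q : (Fin n → ℝ) × (Fin m → ℝ) => h q.1 q.2) (c : ι → ℝ) :
    Continuous (jointCost A B N x h c) := by
  refine (continuous_finsetSum _ fun k _ => ?_).add (by fun_prop)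
  exact hcont.comp
    (((continuous_trajectory_apply A B x k).comp continuous_snd).prodMk
      ((continuous_apply k).comp continuous_snd))

variable {A B X U N z x}

theorem isCompact_jointFeasibleSet (hX : IsCompact X) (hU : IsCompact U) :
    IsCompact (jointFeasibleSet A B X U N z x) := by
  refine (((isCompact_stdSimplex ℝ ι).prod
    (isCompact_univ_pi fun k => ?_)).inter_right ?_).inter_right ?_
  · split_ifs
    exacts [hU, isCompact_singleton]
  · simp only [ofPred_forall]
    exact isClosed_iInter fun k => isClosed_iInter fun _ =>
      hX.isClosed.preimage ((continuous_trajectory_apply A B x k).comp continuous_snd)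
  · exact isClosed_eq (by fun_prop) ((continuous_trajectory_apply A B x N).comp continuous_snd)

theorem feasible_of_mem_jointFeasibleSet {q : (ι → ℝ) × (ℕ → Fin m → ℝ)}
    (hq : q ∈ jointFeasibleSet A B X U N z x) :
    Feasible A B X U (convexHull ℝ (range z)) N x q.2 (trajectory A B x q.2) := by
  obtain ⟨⟨⟨hw, hu⟩, hX⟩, hN⟩ := hq
  refine ⟨rfl, fun _ _ => rfl, hX, fun k hk => by simpa [hk] using hu k (mem_univ k), ?_⟩
  exact nonempty_barycentricWeights_iff.mp ⟨q.1, hw, hN⟩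

theorem exists_mem_jointFeasibleSet_jointCost_eq {u : ℕ → Fin m → ℝ} {xs : ℕ → Fin n → ℝ}
    (hF : Feasible A B X U (convexHull ℝ (range z)) N x u xs) {w : ι → ℝ}
    (hw : w ∈ barycentricWeights z (xs N)) (h : (Fin n → ℝ) → (Fin m → ℝ) → ℝ) (c : ι → ℝ) :
    ∃ q ∈ jointFeasibleSet A B X U N z x,
      jointCost A B N x h c q = ∑ k ∈ Finset.range N, h (xs k) (u k) + ∑ i, w i * c i := by
  set u' : ℕ → Fin m → ℝ := fun k => if k < N then u k else 0
  have hF' : Feasible A B X U (convexHull ℝ (range z)) N x u' xs :=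
    hF.congr_input fun k hk => (if_pos hk).symm
  refine ⟨(w, u'), ⟨⟨⟨hw.1, fun k _ => ?_⟩, fun k hk => ?_⟩, ?_⟩, ?_⟩
  · by_cases hk : k < N
    · simpa [u', hk] using hF.2.2.2.1 k hk
    · simp [u', hk]
  · exact hF'.eq_trajectory hk.le ▸ hF.2.2.1 k hk
  · exact hw.2.trans (hF'.eq_trajectory le_rfl)
  · refine congrArg (· + _) (Finset.sum_congr rfl fun k hk => ?_)
    have hk : k < N := Finset.mem_range.mp hk
    simp only [← hF'.eq_trajectory hk.le, u', if_pos hk]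

end JointProblem

theorem lmpc_minimizer_exists_general
    {n m : ℕ} {ι : Type*} [Fintype ι]
    (A : Matrix (Fin n) (Fin n) ℝ) (B : Matrix (Fin n) (Fin m) ℝ)
    (X : Set (Fin n → ℝ)) (hX : IsCompact X)
    (U : Set (Fin m → ℝ)) (hU : IsCompact U)
    (h : (Fin n → ℝ) → (Fin m → ℝ) → ℝ)
    (hcont : Continuous (fun q : (Fin n → ℝ) × (Fin m → ℝ) => h q.1 q.2))
    (N : ℕ)
    (z : ι → Fin n → ℝ) (c : ι → ℝ)
    (x : Fin n → ℝ)
    (hfeas : ∃ u xs, Feasible A B X U (convexHull ℝ (Set.range z)) N x u xs) :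
    ∃ u xs, Feasible A B X U (convexHull ℝ (Set.range z)) N x u xs ∧
      (∑ k ∈ Finset.range N, h (xs k) (u k)) + barycentric z c (xs N) =
        lmpcValue A B X U (convexHull ℝ (Set.range z)) N h (barycentric z c) x := by
  obtain ⟨u₀, xs₀, hF₀⟩ := hfeas
  obtain ⟨w₀, hw₀⟩ := nonempty_barycentricWeights_iff.mpr hF₀.2.2.2.2
  obtain ⟨q₀, hq₀, -⟩ := exists_mem_jointFeasibleSet_jointCost_eq hF₀ hw₀ h c
  obtain ⟨q, hq, hmin⟩ := (isCompact_jointFeasibleSet hX hU).exists_isMinOn ⟨q₀, hq₀⟩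
    (continuous_jointCost A B N x hcont c).continuousOn
  have hqF := feasible_of_mem_jointFeasibleSet hq
  refine ⟨q.2, _, hqF, Eq.symm (IsLeast.csInf_eq ⟨⟨_, _, hqF, rfl⟩, ?_⟩)⟩
  rintro _ ⟨u, xs, hF, rfl⟩
  obtain ⟨w, hw, hw_eq⟩ := exists_mem_barycentricWeights_barycentric_eq c hF.2.2.2.2
  obtain ⟨q', hq', hq'_eq⟩ := exists_mem_jointFeasibleSet_jointCost_eq hF hw h c
  calc _ ≤ jointCost A B N x h c q := add_le_add_right (barycentric_le_s13 c ⟨hq.1.1.1, hq.2⟩) _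
    _ ≤ jointCost A B N x h c q' := hmin hq'
    _ = _ := by rw [hq'_eq, hw_eq]

/-- Under compactness of the constraint sets and continuity of the stage
cost, the infimum defining the LMPC value function is attained whenever the feasible set
is nonempty. -/
theorem lmpc_minimizer_exists
    {n m : ℕ} {ι : Type*} [Fintype ι] [Nonempty ι]
    (A : Matrix (Fin n) (Fin n) ℝ) (B : Matrix (Fin n) (Fin m) ℝ)
    (X : Set (Fin n → ℝ)) (hX : IsCompact X)
    (U : Set (Fin m → ℝ)) (hU : IsCompact U)
    (h : (Fin n → ℝ) → (Fin m → ℝ) → ℝ)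
    (hcont : Continuous (fun q : (Fin n → ℝ) × (Fin m → ℝ) => h q.1 q.2))
    (N : ℕ) (hN : 1 ≤ N)
    (z : ι → Fin n → ℝ) (c : ι → ℝ)
    (x : Fin n → ℝ)
    (hfeas : ∃ u xs, Feasible A B X U (convexHull ℝ (Set.range z)) N x u xs) :
    ∃ u xs, Feasible A B X U (convexHull ℝ (Set.range z)) N x u xs ∧
      (∑ k ∈ Finset.range N, h (xs k) (u k)) + barycentric z c (xs N) =
        lmpcValue A B X U (convexHull ℝ (Set.range z)) N h (barycentric z c) x :=
  lmpc_minimizer_exists_general A B X hX U hU h hcont N z c x hfeas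
end
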